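/- The probability that the perturbed prediction equals the unperturbed prediction is bounded by the orbit probability: Let h be a maximizer selection, let w ∈ EuclideanSpace ℝ (Fin d), and let y ∈ Y with y ≠ h(w) and ψ y ≠ ψ(h(w)). Then μ_d{ε : h(w + ε) = h(w)} ≤ μ₁{z : z > ⟪w, δψ(y, h(w))⟫}. -/

import Mathlib

/-!
If `h (w + ε) = h w =: ŷ`, then `ŷ` beats `y` at `w + ε`, so `⟪w + ε, δ⟫ ≤ 0` for the unit vector
`δ := δψ(y, ŷ)`; that is, `ε` lies in the half-space `⟪w, δ⟫ ≤ ⟪-δ, ε⟫`. The image of the standard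
Gaussian under a norm-one linear functional is `μ₁`, which has no atoms, so this half-space has
measure `μ₁ (Ioi ⟪w, δ⟫)`.
-/

open MeasureTheory ProbabilityTheory
open scoped InnerProductSpace ENNReal

/-- The standard Gaussian measure on `EuclideanSpace ℝ (Fin d)`. -/
noncomputable def stdGaussianE (d : ℕ) : Measure (EuclideanSpace ℝ (Fin d)) :=
  (Measure.pi fun _ : Fin d => gaussianReal 0 1).map
    (MeasurableEquiv.toLp 2 (Fin d → ℝ))

/-- The normalized feature difference `δψ(y, y')`. -/
noncomputable def deltaFeat {d : ℕ} {Y : Type*} [DecidableEq Y]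
    (ψ : Y → EuclideanSpace ℝ (Fin d)) (y y' : Y) : EuclideanSpace ℝ (Fin d) :=
  if y = y' then 0 else ‖ψ y - ψ y'‖⁻¹ • (ψ y - ψ y')

section StdGaussian

variable {E : Type*} [NormedAddCommGroup E] [InnerProductSpace ℝ E] [FiniteDimensional ℝ E]
  [MeasurableSpace E] [BorelSpace E]

lemma stdGaussian_map_strongDual (L : StrongDual ℝ E) :
    (stdGaussian E).map L = gaussianReal 0 (‖L‖₊ ^ 2) := by
  rw [IsGaussian.map_eq_gaussianReal, integral_strongDual_stdGaussian,
    variance_dual_stdGaussian]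
  congr
  ext
  simp

lemma stdGaussian_setOf_le_inner {u : E} (hu : ‖u‖ = 1) (c : ℝ) :
    stdGaussian E {x | c ≤ ⟪u, x⟫_ℝ} = gaussianReal 0 1 (Set.Ioi c) := by
  have hL : ‖innerSL ℝ u‖₊ = 1 := by
    rw [← NNReal.coe_eq_one, coe_nnnorm, innerSL_apply_norm, hu]
  have hmap := stdGaussian_map_strongDual (innerSL ℝ u)
  rw [hL, one_pow] at hmap
  have := nullSingletonClass_gaussianReal (μ := 0) one_ne_zero
  rw [measure_congr Ioi_ae_eq_Ici, ← hmap, Measure.map_apply (by fun_prop) measurableSet_Ici]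
  rfl

end StdGaussian

lemma stdGaussianE_eq_stdGaussian (d : ℕ) :
    stdGaussianE d = stdGaussian (EuclideanSpace ℝ (Fin d)) :=
  map_pi_eq_stdGaussian

section DeltaFeat

variable {d : ℕ} {Y : Type*} [DecidableEq Y] (ψ : Y → EuclideanSpace ℝ (Fin d))

lemma norm_deltaFeat {y y' : Y} (hψ : ψ y ≠ ψ y') : ‖deltaFeat ψ y y'‖ = 1 := by
  have hy : y ≠ y' := fun h => hψ (congrArg ψ h)
  rw [deltaFeat, if_neg hy, norm_smul, norm_inv, norm_norm,
    inv_mul_cancel₀ (norm_ne_zero_iff.mpr (sub_ne_zero.mpr hψ))]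

lemma inner_deltaFeat_nonpos {v : EuclideanSpace ℝ (Fin d)} {ŷ : Y}
    (hŷ : ∀ y', ⟪v, ψ y'⟫_ℝ ≤ ⟪v, ψ ŷ⟫_ℝ) (y : Y) : ⟪v, deltaFeat ψ y ŷ⟫_ℝ ≤ 0 := by
  unfold deltaFeat
  split_ifs
  · simp
  · rw [real_inner_smul_right, inner_sub_right]
    exact mul_nonpos_of_nonneg_of_nonpos (by positivity) (sub_nonpos.mpr (hŷ y))

end DeltaFeat

theorem stmt_9_general {d : ℕ} {Y : Type*} [DecidableEq Y]
    (ψ : Y → EuclideanSpace ℝ (Fin d))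
    (h : EuclideanSpace ℝ (Fin d) → Y)
    (hmax : ∀ (v : EuclideanSpace ℝ (Fin d)) (y' : Y), ⟪v, ψ (h v)⟫_ℝ ≥ ⟪v, ψ y'⟫_ℝ)
    (w : EuclideanSpace ℝ (Fin d)) (y : Y)
    (hψ : ψ y ≠ ψ (h w)) :
    stdGaussianE d {ε | h (w + ε) = h w} ≤
      gaussianReal 0 1 {z | z > ⟪w, deltaFeat ψ y (h w)⟫_ℝ} := by
  set δ := deltaFeat ψ y (h w)
  have hsub : {ε | h (w + ε) = h w} ⊆ {ε | ⟪w, δ⟫_ℝ ≤ ⟪-δ, ε⟫_ℝ} := by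
    intro ε (hε : h (w + ε) = h w)
    have hδ : ⟪w + ε, δ⟫_ℝ ≤ 0 := inner_deltaFeat_nonpos ψ (hε ▸ hmax (w + ε)) y
    change ⟪w, δ⟫_ℝ ≤ ⟪-δ, ε⟫_ℝ
    rw [inner_add_left, real_inner_comm δ ε] at hδ
    rw [inner_neg_left]
    linarith
  calc stdGaussianE d {ε | h (w + ε) = h w}
      ≤ stdGaussian _ {ε | ⟪w, δ⟫_ℝ ≤ ⟪-δ, ε⟫_ℝ} := by
        rw [stdGaussianE_eq_stdGaussian]; exact measure_mono hsub
    _ = gaussianReal 0 1 {z | z > ⟪w, δ⟫_ℝ} :=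
        stdGaussian_setOf_le_inner (by rw [norm_neg, norm_deltaFeat ψ hψ]) _

theorem stmt_9 {d : ℕ} (hd : 0 < d) {Y : Type*} [Fintype Y] [Nonempty Y] [DecidableEq Y]
    [MeasurableSpace Y] [MeasurableSingletonClass Y]
    (ψ : Y → EuclideanSpace ℝ (Fin d))
    (h : EuclideanSpace ℝ (Fin d) → Y) (hhm : Measurable h)
    (hmax : ∀ (v : EuclideanSpace ℝ (Fin d)) (y' : Y), ⟪v, ψ (h v)⟫_ℝ ≥ ⟪v, ψ y'⟫_ℝ)
    (w : EuclideanSpace ℝ (Fin d)) (y : Y)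
    (hne : y ≠ h w) (hψ : ψ y ≠ ψ (h w)) :
    stdGaussianE d {ε | h (w + ε) = h w} ≤
      gaussianReal 0 1 {z | z > ⟪w, deltaFeat ψ y (h w)⟫_ℝ} :=
  stmt_9_general ψ h hmax w y hψ
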